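/- Let Λ, β, α, μ₁, μ₂, d₁, d₂ > 0, θ ∈ ℝ, c ∈ ℝ, S₀ = Λ/μ₁. Suppose S, I : ℝ → ℝ are differentiable, I(ξ) ≥ 0 and S(ξ) ≥ 0 for all ξ, and (S, I) solves the traveling-wave system cS'(ξ) = d₁𝔍[S](ξ) + Λ − βS(ξ)I(ξ)/(1 + αI(ξ)) − μ₁S(ξ), cI'(ξ) = d₂𝔍[I](ξ) + βS(ξ)I(ξ)/(1 + αI(ξ)) − μ₂I(ξ) for all ξ ∈ ℝ. Then: (i) S(ξ) > 0 for every ξ ∈ ℝ; (ii) if in addition S(ξ) ≤ S₀ for all ξ and I(ξ) > 0 for all ξ, then S(ξ) < S₀ for every ξ ∈ ℝ. -/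

import Mathlib

/-- Discrete Laplacian in direction `θ`. -/
noncomputable def lap (θ : ℝ) (φ : ℝ → ℝ) (ξ : ℝ) : ℝ :=
  φ (ξ + Real.sin θ) + φ (ξ - Real.sin θ) + φ (ξ + Real.cos θ) + φ (ξ - Real.cos θ) - 4 * φ ξ

/-!
At a point where `S` attains its global minimum or maximum, `S'` vanishes and the discrete
Laplacian has a sign, so the `S`-equation forces the reaction term to have the opposite sign.
At a zero of `S` the reaction term is `Λ > 0`; at a point where `S = Λ / μ₁` and `I > 0` it is
`-β S I / (1 + α I) < 0`. Either way this is a contradiction.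
-/

theorem lap_nonneg_of_forall_le {θ ξ : ℝ} {φ : ℝ → ℝ} (h : ∀ y, φ ξ ≤ φ y) :
    0 ≤ lap θ φ ξ := by
  unfold lap
  linarith [h (ξ + Real.sin θ), h (ξ - Real.sin θ), h (ξ + Real.cos θ), h (ξ - Real.cos θ)]

theorem lap_nonpos_of_forall_ge {θ ξ : ℝ} {φ : ℝ → ℝ} (h : ∀ y, φ y ≤ φ ξ) :
    lap θ φ ξ ≤ 0 := by
  unfold lap
  linarith [h (ξ + Real.sin θ), h (ξ - Real.sin θ), h (ξ + Real.cos θ), h (ξ - Real.cos θ)]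

theorem nonpos_of_forall_le_of_deriv_eq {θ ξ c d f : ℝ} {φ : ℝ → ℝ} (hd : 0 ≤ d)
    (hmin : ∀ y, φ ξ ≤ φ y) (heq : c * deriv φ ξ = d * lap θ φ ξ + f) : f ≤ 0 := by
  have hderiv : deriv φ ξ = 0 := IsLocalMin.deriv_eq_zero (.of_forall hmin)
  rw [hderiv, mul_zero] at heq
  linarith [mul_nonneg hd (lap_nonneg_of_forall_le (θ := θ) hmin)]

theorem nonneg_of_forall_ge_of_deriv_eq {θ ξ c d f : ℝ} {φ : ℝ → ℝ} (hd : 0 ≤ d)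
    (hmax : ∀ y, φ y ≤ φ ξ) (heq : c * deriv φ ξ = d * lap θ φ ξ + f) : 0 ≤ f := by
  have hderiv : deriv φ ξ = 0 := IsLocalMax.deriv_eq_zero (.of_forall hmax)
  rw [hderiv, mul_zero] at heq
  linarith [mul_nonpos_of_nonneg_of_nonpos hd (lap_nonpos_of_forall_ge (θ := θ) hmax)]

theorem stmt_11_general (Λ β α μ₁ d₁ θ c : ℝ)
    (hΛ : 0 < Λ) (hβ : 0 < β) (hα : 0 < α) (hμ₁ : 0 < μ₁)
    (hd₁ : 0 < d₁)
    (S₀ : ℝ) (hS₀ : S₀ = Λ / μ₁)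
    (S I : ℝ → ℝ)
    (hSpos : ∀ ξ : ℝ, 0 ≤ S ξ)
    (hSeq : ∀ ξ : ℝ, c * deriv S ξ =
      d₁ * lap θ S ξ + Λ - β * S ξ * I ξ / (1 + α * I ξ) - μ₁ * S ξ) :
    (∀ ξ : ℝ, 0 < S ξ) ∧
    ((∀ ξ : ℝ, S ξ ≤ S₀) → (∀ ξ : ℝ, 0 < I ξ) → ∀ ξ : ℝ, S ξ < S₀) := by
  have hSeq' (ξ : ℝ) : c * deriv S ξ =
      d₁ * lap θ S ξ + (Λ - β * S ξ * I ξ / (1 + α * I ξ) - μ₁ * S ξ) := by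
    rw [hSeq]; ring
  refine ⟨fun ξ => (hSpos ξ).lt_of_ne' fun hS => ?_,
    fun hSle hIpos ξ => (hSle ξ).lt_of_ne fun hS => ?_⟩
  · have hreact := nonpos_of_forall_le_of_deriv_eq hd₁.le (fun y => hS ▸ hSpos y) (hSeq' ξ)
    rw [hS] at hreact
    simp only [mul_zero, zero_mul, zero_div, sub_zero] at hreact
    linarith
  · have hreact := nonneg_of_forall_ge_of_deriv_eq hd₁.le (fun y => hS ▸ hSle y) (hSeq' ξ)
    have hinfection : 0 < β * S ξ * I ξ / (1 + α * I ξ) := by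
      have hS₀pos : 0 < S₀ := hS₀ ▸ div_pos hΛ hμ₁
      have hIξ := hIpos ξ
      rw [hS]
      positivity
    have hequilibrium : Λ - μ₁ * S ξ = 0 := by
      rw [hS, hS₀]; field_simp; ring
    linarith

theorem stmt_11 (Λ β α μ₁ μ₂ d₁ d₂ θ c : ℝ)
    (hΛ : 0 < Λ) (hβ : 0 < β) (hα : 0 < α) (hμ₁ : 0 < μ₁) (hμ₂ : 0 < μ₂)
    (hd₁ : 0 < d₁) (hd₂ : 0 < d₂)
    (S₀ : ℝ) (hS₀ : S₀ = Λ / μ₁)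
    (S I : ℝ → ℝ)
    (hSdiff : Differentiable ℝ S) (hIdiff : Differentiable ℝ I)
    (hSpos : ∀ ξ : ℝ, 0 ≤ S ξ) (hIpos : ∀ ξ : ℝ, 0 ≤ I ξ)
    (hSeq : ∀ ξ : ℝ, c * deriv S ξ =
      d₁ * lap θ S ξ + Λ - β * S ξ * I ξ / (1 + α * I ξ) - μ₁ * S ξ)
    (hIeq : ∀ ξ : ℝ, c * deriv I ξ =
      d₂ * lap θ I ξ + β * S ξ * I ξ / (1 + α * I ξ) - μ₂ * I ξ) :
    (∀ ξ : ℝ, 0 < S ξ) ∧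
    ((∀ ξ : ℝ, S ξ ≤ S₀) → (∀ ξ : ℝ, 0 < I ξ) → ∀ ξ : ℝ, S ξ < S₀) :=
  stmt_11_general Λ β α μ₁ d₁ θ c hΛ hβ hα hμ₁ hd₁ S₀ hS₀ S I hSpos hSeq
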